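/- If an affine realization (p, l) of an incidence geometry (P, L, I) is projectively infinitesimally rigid, i.e., every infinitesimal motion of (p, l) is trivial, then |I| ≥ 2|P| + 2|L| − 8. -/

import Mathlib

open Matrix

/-- Homogenization: `(v₁, v₂) ↦ (v₁, v₂, 1)`. -/
def hat (v : Fin 2 → ℝ) : Fin 3 → ℝ := Fin.snoc v 1

/-- An affine realization of the incidence geometry `(P, L, I)`:
`l j ⬝ p i + 1 = 0` for every incidence `(i, j)`. -/
def IsAffRealization {P L : Type*} (I : Set (P × L))
    (p : P → Fin 2 → ℝ) (l : L → Fin 2 → ℝ) : Prop :=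
  ∀ ij ∈ I, l ij.2 ⬝ᵥ p ij.1 + 1 = 0

/-- An infinitesimal motion of `(p, l)`. -/
def IsInfMotion {P L : Type*} (I : Set (P × L))
    (p : P → Fin 2 → ℝ) (l : L → Fin 2 → ℝ)
    (dp : P → Fin 2 → ℝ) (dl : L → Fin 2 → ℝ) : Prop :=
  ∀ ij ∈ I, p ij.1 ⬝ᵥ dl ij.2 + l ij.2 ⬝ᵥ dp ij.1 = 0

/-- A trivial infinitesimal motion: the linearization of a projective transformation,
given by a `3 × 3` matrix `X`. -/
def IsTrivMotion {P L : Type*}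
    (p : P → Fin 2 → ℝ) (l : L → Fin 2 → ℝ)
    (dp : P → Fin 2 → ℝ) (dl : L → Fin 2 → ℝ) : Prop :=
  ∃ X : Matrix (Fin 3) (Fin 3) ℝ,
    (∀ i, dp i = Fin.init (X *ᵥ hat (p i)) - (X *ᵥ hat (p i)) 2 • p i) ∧
    (∀ j, dl j = -(Fin.init (Xᵀ *ᵥ hat (l j))) + (Xᵀ *ᵥ hat (l j)) 2 • l j)

/-!
Infinitesimal motions are the kernel of a linear map from the `2|P| + 2|L|`-dimensional space
of velocities to `ℝ^I`, and trivial motions are the image of the `9`-dimensional space of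
`3 × 3` matrices. The identity matrix induces the zero motion, so trivial motions span at most
`8` dimensions. Rigidity puts the kernel inside them, and rank–nullity gives
`2|P| + 2|L| ≤ |I| + 8`.
-/

open Module

@[simp]
theorem hat_two (v : Fin 2 → ℝ) : hat v 2 = 1 :=
  Fin.snoc_last (α := fun _ => ℝ) (p := v) 1

@[simp]
theorem init_hat (v : Fin 2 → ℝ) : Fin.init (hat v) = v :=
  Fin.init_snoc (α := fun _ => ℝ) 1 v

theorem Module.finrank_le_finrank_add_of_ker_le_range {K U V W : Type*} [DivisionRing K]
    [AddCommGroup U] [Module K U] [AddCommGroup V] [Module K V] [FiniteDimensional K V]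
    [AddCommGroup W] [Module K W] [FiniteDimensional K W]
    (f : V →ₗ[K] W) (g : U →ₗ[K] V) (h : LinearMap.ker f ≤ LinearMap.range g) :
    finrank K V ≤ finrank K W + finrank K (LinearMap.range g) := by
  have hrange := Submodule.finrank_le (LinearMap.range f)
  have hker := Submodule.finrank_mono h
  have := LinearMap.finrank_range_add_finrank_ker f
  omega

section Motions

variable {P L : Type*}

def infMotionMap (I : Set (P × L)) (p : P → Fin 2 → ℝ) (l : L → Fin 2 → ℝ) :
    ((P → Fin 2 → ℝ) × (L → Fin 2 → ℝ)) →ₗ[ℝ] (I → ℝ) where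
  toFun v ij := p ij.1.1 ⬝ᵥ v.2 ij.1.2 + l ij.1.2 ⬝ᵥ v.1 ij.1.1
  map_add' a b := by
    funext ij
    simp only [Prod.fst_add, Prod.snd_add, Pi.add_apply, dotProduct_add]
    ring
  map_smul' c a := by
    funext ij
    simp only [Prod.smul_fst, Prod.smul_snd, Pi.smul_apply, dotProduct_smul, smul_eq_mul,
      RingHom.id_apply]
    ring

def trivMotionMap (p : P → Fin 2 → ℝ) (l : L → Fin 2 → ℝ) :
    Matrix (Fin 3) (Fin 3) ℝ →ₗ[ℝ] ((P → Fin 2 → ℝ) × (L → Fin 2 → ℝ)) where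
  toFun X :=
    (fun i => Fin.init (X *ᵥ hat (p i)) - (X *ᵥ hat (p i)) 2 • p i,
     fun j => -(Fin.init (Xᵀ *ᵥ hat (l j))) + (Xᵀ *ᵥ hat (l j)) 2 • l j)
  map_add' A B := by
    refine Prod.ext ?_ ?_ <;> funext x k <;>
      simp only [add_mulVec, transpose_add, Prod.mk_add_mk, Pi.add_apply, Pi.sub_apply,
        Pi.neg_apply, Pi.smul_apply, Fin.init, smul_eq_mul] <;> ring
  map_smul' c A := by
    refine Prod.ext ?_ ?_ <;> funext x k <;>
      simp only [smul_mulVec, transpose_smul, Prod.smul_mk, Pi.add_apply, Pi.sub_apply,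
        Pi.neg_apply, Pi.smul_apply, Fin.init, smul_eq_mul, RingHom.id_apply] <;> ring

theorem mem_ker_infMotionMap {I : Set (P × L)} {p : P → Fin 2 → ℝ} {l : L → Fin 2 → ℝ}
    {dp : P → Fin 2 → ℝ} {dl : L → Fin 2 → ℝ} :
    (dp, dl) ∈ LinearMap.ker (infMotionMap I p l) ↔ IsInfMotion I p l dp dl := by
  rw [LinearMap.mem_ker, funext_iff]
  exact ⟨fun h ij hij => h ⟨ij, hij⟩, fun h ij => h ij.1 ij.2⟩

theorem mem_range_trivMotionMap {p : P → Fin 2 → ℝ} {l : L → Fin 2 → ℝ}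
    {dp : P → Fin 2 → ℝ} {dl : L → Fin 2 → ℝ} :
    (dp, dl) ∈ LinearMap.range (trivMotionMap p l) ↔ IsTrivMotion p l dp dl := by
  simp only [LinearMap.mem_range, trivMotionMap, LinearMap.coe_mk, AddHom.coe_mk, Prod.mk.injEq,
    funext_iff, IsTrivMotion, eq_comm]

theorem trivMotionMap_one (p : P → Fin 2 → ℝ) (l : L → Fin 2 → ℝ) :
    trivMotionMap p l 1 = 0 := by
  refine Prod.ext ?_ ?_ <;> funext x <;> simp [trivMotionMap]

theorem finrank_range_trivMotionMap_le (p : P → Fin 2 → ℝ) (l : L → Fin 2 → ℝ) :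
    finrank ℝ (LinearMap.range (trivMotionMap p l)) ≤ 8 := by
  have hker : 0 < finrank ℝ (LinearMap.ker (trivMotionMap p l)) :=
    finrank_pos_iff_exists_ne_zero.mpr
      ⟨⟨1, trivMotionMap_one p l⟩, by simp [Subtype.ext_iff]⟩
  have := LinearMap.finrank_range_add_finrank_ker (trivMotionMap p l)
  rw [finrank_matrix, Fintype.card_fin, finrank_self] at this
  omega

theorem finrank_velocities [Fintype P] [Fintype L] :
    finrank ℝ ((P → Fin 2 → ℝ) × (L → Fin 2 → ℝ)) = 2 * Fintype.card P + 2 * Fintype.card L := by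
  simp [finrank_prod, finrank_pi_fintype, mul_comm]

end Motions

theorem infRigid_count_general
    {P L : Type*} [Fintype P] [Fintype L] (I : Set (P × L))
    (p : P → Fin 2 → ℝ) (l : L → Fin 2 → ℝ)
    (hinf : ∀ dp dl, IsInfMotion I p l dp dl → IsTrivMotion p l dp dl) :
    2 * (Fintype.card P : ℤ) + 2 * (Fintype.card L : ℤ) - 8 ≤ (I.ncard : ℤ) := by
  have : Fintype I := I.toFinite.fintype
  have hker : LinearMap.ker (infMotionMap I p l) ≤ LinearMap.range (trivMotionMap p l) :=
    fun ⟨dp, dl⟩ hv => mem_range_trivMotionMap.mpr (hinf dp dl (mem_ker_infMotionMap.mp hv))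
  have hcount := finrank_le_finrank_add_of_ker_le_range _ _ hker
  rw [finrank_velocities, finrank_pi, Set.fintypeCard_eq_ncard] at hcount
  have := finrank_range_trivMotionMap_le p l
  omega

/-- Theorem: if an affine realization `(p, l)` of `(P, L, I)` is projectively
infinitesimally rigid (every infinitesimal motion is trivial), then
`|I| ≥ 2|P| + 2|L| − 8`. -/
theorem infRigid_count
    {P L : Type*} [Fintype P] [Fintype L] (I : Set (P × L))
    (p : P → Fin 2 → ℝ) (l : L → Fin 2 → ℝ)
    (hreal : IsAffRealization I p l)
    (hinf : ∀ dp dl, IsInfMotion I p l dp dl → IsTrivMotion p l dp dl) :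
    2 * (Fintype.card P : ℤ) + 2 * (Fintype.card L : ℤ) - 8 ≤ (I.ncard : ℤ) :=
  infRigid_count_general I p l hinf
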